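/- LDL satisfaction coincides with DHT satisfaction on total traces: for any trace T of length λ, any dynamic formula φ, and any k < λ, the total HT-trace ⟨T,T⟩ satisfies φ at k in DHT if and only if T satisfies φ at k in LDL; moreover the DHT accessibility relation ‖ρ‖_{⟨T,T⟩} equals the LDL accessibility relation ‖ρ‖_T for every path expression ρ. -/
import Mathlib


namespace LDL

mutual
inductive Formula (α : Type) : Type where
  | atom : α → Formula α
  | bot : Formula α
  | top : Formula α
  | dia : Path α → Formula α → Formula α
  | box : Path α → Formula α → Formula α

inductive Path (α : Type) : Type where
  | tau : Path α
  | test : Formula α → Path α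
  | plus : Path α → Path α → Path α
  | seq : Path α → Path α → Path α
  | star : Path α → Path α
end

/-- n-fold iteration of a relation, with the 0-fold case restricted to points `< lam`. -/
def iterRel (r : ℕ → ℕ → Prop) (lam : ℕ) : ℕ → ℕ → ℕ → Prop
  | 0, k, i => k = i ∧ k < lam
  | n+1, k, i => ∃ j, r k j ∧ iterRel r lam n j i

mutual
/-- LDL_f satisfaction over a finite trace `T` of length `lam`. -/
def Sat (T : ℕ → Set α) (lam : ℕ) (φ : Formula α) (k : ℕ) : Prop :=
  match φ with
  | .atom a => a ∈ T k
  | .bot => False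
  | .top => True
  | .dia ρ ψ => ∃ i, Rel T lam ρ k i ∧ Sat T lam ψ i
  | .box ρ ψ => ∀ i, Rel T lam ρ k i → Sat T lam ψ i

/-- Accessibility relation of a path expression over trace `T` of length `lam`. -/
def Rel (T : ℕ → Set α) (lam : ℕ) (ρ : Path α) (k i : ℕ) : Prop :=
  match ρ with
  | .tau => i = k + 1 ∧ k + 1 < lam
  | .test φ => i = k ∧ Sat T lam φ k
  | .plus ρ₁ ρ₂ => Rel T lam ρ₁ k i ∨ Rel T lam ρ₂ k i
  | .seq ρ₁ ρ₂ => ∃ j, Rel T lam ρ₁ k j ∧ Rel T lam ρ₂ j i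
  | .star ρ => ∃ n, iterRel (Rel T lam ρ) lam n k i
end


mutual
/-- DHT satisfaction over HT-traces `⟨H,T⟩` of length `lam`. -/
def SatHT (H T : ℕ → Set α) (lam : ℕ) (φ : Formula α) (k : ℕ) : Prop :=
  match φ with
  | .atom a => a ∈ H k
  | .bot => False
  | .top => True
  | .dia ρ ψ => ∃ i, RelHT H T lam ρ k i ∧ SatHT H T lam ψ i
  | .box ρ ψ =>
      (∀ i, RelHT H T lam ρ k i → SatHT H T lam ψ i) ∧
      (∀ i, RelHT T T lam ρ k i → SatHT T T lam ψ i)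

/-- DHT accessibility relation over HT-traces. -/
def RelHT (H T : ℕ → Set α) (lam : ℕ) (ρ : Path α) (k i : ℕ) : Prop :=
  match ρ with
  | .tau => i = k + 1 ∧ k + 1 < lam
  | .test φ => i = k ∧ SatHT H T lam φ k
  | .plus ρ₁ ρ₂ => RelHT H T lam ρ₁ k i ∨ RelHT H T lam ρ₂ k i
  | .seq ρ₁ ρ₂ => ∃ j, RelHT H T lam ρ₁ k j ∧ RelHT H T lam ρ₂ j i
  | .star ρ => ∃ n, iterRel (RelHT H T lam ρ) lam n k i
end

/-- Negation, defined as `¬φ := [φ?]⊥`. -/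
def Formula.neg (φ : Formula α) : Formula α := .box (.test φ) .bot

theorem iterRel_congr {r r' : ℕ → ℕ → Prop} (h : ∀ k i, r k i ↔ r' k i)
    (lam n k i : ℕ) : iterRel r lam n k i ↔ iterRel r' lam n k i := by
  induction n generalizing k with
  | zero => rfl
  | succ n ih =>
    simp only [iterRel]
    exact exists_congr fun j => and_congr (h k j) (ih j)

mutual
theorem satIff {α : Type} (T : ℕ → Set α) (lam : ℕ) (φ : Formula α) (k : ℕ) :
    SatHT T T lam φ k ↔ Sat T lam φ k := by
  cases φ with
  | atom a => exact Iff.rfl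
  | bot => exact Iff.rfl
  | top => exact Iff.rfl
  | dia ρ ψ =>
    simp only [SatHT, Sat]
    exact exists_congr fun i => and_congr (relIff T lam ρ k i) (satIff T lam ψ i)
  | box ρ ψ =>
    simp only [SatHT, Sat]
    constructor
    · intro h i hr
      exact (satIff T lam ψ i).1 (h.1 i ((relIff T lam ρ k i).2 hr))
    · intro h
      refine ⟨fun i hr => ?_, fun i hr => ?_⟩ <;>
        exact (satIff T lam ψ i).2 (h i ((relIff T lam ρ k i).1 hr))

theorem relIff {α : Type} (T : ℕ → Set α) (lam : ℕ) (ρ : Path α) (k i : ℕ) :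
    RelHT T T lam ρ k i ↔ Rel T lam ρ k i := by
  cases ρ with
  | tau => exact Iff.rfl
  | test φ =>
    simp only [RelHT, Rel]
    exact and_congr Iff.rfl (satIff T lam φ k)
  | plus ρ₁ ρ₂ =>
    exact or_congr (relIff T lam ρ₁ k i) (relIff T lam ρ₂ k i)
  | seq ρ₁ ρ₂ =>
    exact exists_congr fun j => and_congr (relIff T lam ρ₁ k j) (relIff T lam ρ₂ j i)
  | star ρ =>
    exact exists_congr fun n => iterRel_congr (relIff T lam ρ) lam n k i
end

/-- LDL satisfaction coincides with DHT satisfaction on total traces,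
and the DHT accessibility relation on a total trace equals the LDL one. -/
theorem dht_total_eq_ldl {α : Type} (T : ℕ → Set α) (lam : ℕ) :
    (∀ (φ : Formula α) (k : ℕ), k < lam → (SatHT T T lam φ k ↔ Sat T lam φ k)) ∧
    (∀ (ρ : Path α) (k i : ℕ), RelHT T T lam ρ k i ↔ Rel T lam ρ k i) :=
  ⟨fun φ k _ => satIff T lam φ k, relIff T lam⟩

end LDL
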